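/- For every permutation β, the set of properties {Av(δ) : δ ≤ β} is query-complete, where Av(δ) denotes the set of all permutations that avoid δ. -/

import Mathlib

/-- A permutation of length `n`. -/
abbrev Perm (n : ℕ) := Equiv.Perm (Fin n)

/-- `σ` is contained in `π`: there is a strictly increasing sequence of indices of `π`
on which `π` is order isomorphic to `σ`. -/
def Contains {m n : ℕ} (σ : Perm m) (π : Perm n) : Prop :=
  ∃ f : Fin m → Fin n, StrictMono f ∧ ∀ s t : Fin m, π (f s) < π (f t) ↔ σ s < σ t

/-- `π` is the inflation `σ[α 0, …, α (m-1)]` of `σ` by the nonempty permutations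
`α i` (of lengths `k i ≥ 1`): `π` has length `∑ i, k i` and its value at position
`(∑_{t < i} k t) + j` equals `(∑_{t : σ t < σ i} k t) + α i j`. -/
def IsInflation {N m : ℕ} {k : Fin m → ℕ} (σ : Perm m) (α : ∀ i, Perm (k i))
    (π : Perm N) : Prop :=
  (∀ i, 0 < k i) ∧ N = ∑ i, k i ∧
    ∀ (i : Fin m) (j : Fin (k i)) (p : Fin N),
      (p : ℕ) = (∑ t ∈ Finset.univ.filter fun t => t < i, k t) + (j : ℕ) →
      (π p : ℕ) = (∑ t ∈ Finset.univ.filter fun t => σ t < σ i, k t) + (α i j : ℕ)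

/-- A set of properties (a property is a set of permutations) is query-complete:
whether an inflation `σ[α 0, …, α (m-1)]` satisfies a property `P` of the set depends
only on `σ` and on which properties of the set each block `α i` satisfies. -/
def QueryComplete (Ps : Set (∀ n, Set (Perm n))) : Prop :=
  ∀ ⦃m : ℕ⦄ (σ : Perm m) (k k' : Fin m → ℕ)
    (α : ∀ i, Perm (k i)) (α' : ∀ i, Perm (k' i)),
    (∀ i : Fin m, ∀ Q ∈ Ps, α i ∈ Q (k i) ↔ α' i ∈ Q (k' i)) →
    ∀ P ∈ Ps, ∀ ⦃N N' : ℕ⦄ (π : Perm N) (π' : Perm N'),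
      IsInflation σ α π → IsInflation σ α' π' → (π ∈ P N ↔ π' ∈ P N')

/-!
An occurrence of `δ` in an inflation `σ[α₁, …, αₘ]` is described by the block each entry of `δ`
falls into (a monotone assignment, compatible with `σ` across blocks) together with, in each block
`αᵢ`, an occurrence of the subpattern of `δ` formed by the entries sent to block `i`. Every such
subpattern is contained in `δ`, hence in `β`, so whether `αᵢ` contains it is one of the queries
`αᵢ ∈ Av(δ')`, `δ' ≤ β`.
-/

open Finset Function

section Occurrences

variable {S V W : Type*} [LinearOrder S] [LinearOrder V] [LinearOrder W]

-- `Contains σ π` is `Occurs σ π`; indexing by an arbitrary linear order lets a subpattern of a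
-- permutation be used as it stands, without first standardizing it to a permutation.
def Occurs (f : S → V) {n : ℕ} (π : Perm n) : Prop :=
  ∃ e : S → Fin n, StrictMono e ∧ ∀ s t, π (e s) < π (e t) ↔ f s < f t

theorem Occurs.trans {f : S → V} {n n' : ℕ} {π : Perm n} {ρ : Perm n'} (hf : Occurs f π)
    (hπ : Contains π ρ) : Occurs f ρ := by
  obtain ⟨e, he, hfe⟩ := hf
  obtain ⟨g, hg, hπg⟩ := hπ
  exact ⟨g ∘ e, hg.comp he, fun s t => (hπg _ _).trans (hfe s t)⟩

theorem Occurs.injective {f : S → V} {n : ℕ} {π : Perm n} (hf : Occurs f π) :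
    Injective f := by
  obtain ⟨e, he, hfe⟩ := hf
  intro s t hst
  have hlt : ¬ π (e s) < π (e t) := (hfe s t).not.2 hst.not_lt
  have hgt : ¬ π (e t) < π (e s) := (hfe t s).not.2 hst.symm.not_lt
  exact he.injective (π.injective (le_antisymm (not_lt.1 hgt) (not_lt.1 hlt)))

theorem occurs_congr {f : S → V} {g : S → W} {n : ℕ} {π : Perm n}
    (h : ∀ s t, f s < f t ↔ g s < g t) : Occurs f π ↔ Occurs g π :=
  exists_congr fun _ => and_congr_right fun _ => forall₂_congr fun s t => by rw [h]

theorem occurs_comp_orderIso {S' : Type*} [LinearOrder S'] (e : S' ≃o S) (f : S → V)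
    {n : ℕ} {π : Perm n} : Occurs (f ∘ e) π ↔ Occurs f π := by
  constructor
  · rintro ⟨g, hg, hfg⟩
    refine ⟨g ∘ e.symm, hg.comp e.symm.strictMono, fun s t => ?_⟩
    simpa using hfg (e.symm s) (e.symm t)
  · rintro ⟨g, hg, hfg⟩
    exact ⟨g ∘ e, hg.comp e.strictMono, fun s t => hfg (e s) (e t)⟩

theorem occurs_subtype {d : ℕ} (δ : Perm d) (P : Fin d → Prop) :
    Occurs (fun s : Subtype P => δ s) δ :=
  ⟨Subtype.val, Subtype.strictMono_coe _, fun _ _ => Iff.rfl⟩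

theorem exists_perm_lt_iff_lt {c : ℕ} (g : Fin c → V) (hg : Injective g) :
    ∃ p : Perm c, ∀ r r', p r < p r' ↔ g r < g r' := by
  have hsorted : StrictMono (g ∘ Tuple.sort g) :=
    (Tuple.monotone_sort g).strictMono_of_injective (hg.comp (Tuple.sort g).injective)
  refine ⟨(Tuple.sort g).symm, fun r r' => ?_⟩
  simpa using (hsorted.lt_iff_lt (a := (Tuple.sort g).symm r) (b := (Tuple.sort g).symm r')).symm

theorem exists_contains_iff_occurs [Fintype S] {f : S → V} (hf : Injective f) :
    ∃ (c : ℕ) (p : Perm c), ∀ ⦃n : ℕ⦄ (π : Perm n), Contains p π ↔ Occurs f π := by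
  let e := Fintype.orderIsoFinOfCardEq S rfl
  obtain ⟨p, hp⟩ := exists_perm_lt_iff_lt (f ∘ e) (hf.comp e.injective)
  exact ⟨_, p, fun n π => (occurs_congr hp).trans (occurs_comp_orderIso e f)⟩

theorem occurs_iff_of_contains_iff [Fintype S] {f : S → V} {b n n' : ℕ} {β : Perm b}
    {A : Perm n} {A' : Perm n'} (hfβ : Occurs f β)
    (h : ∀ (c : ℕ) (p : Perm c), Contains p β → (Contains p A ↔ Contains p A')) :
    Occurs f A ↔ Occurs f A' := by
  obtain ⟨c, p, hp⟩ := exists_contains_iff_occurs hfβ.injective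
  rw [← hp, ← hp]
  exact h c p ((hp β).2 hfβ)

end Occurrences

section Blocks

variable {m : ℕ} (k : Fin m → ℕ)

-- In an inflation, `blockStart k id i` is the first position of block `i` and
-- `blockStart k σ i` its smallest value (both counted from `0`).
def blockStart (g : Fin m → Fin m) (i : Fin m) : ℕ :=
  ∑ t ∈ univ.filter (fun t => g t < g i), k t

theorem blockStart_add_le_blockStart {g : Fin m → Fin m} {i i' : Fin m} (h : g i < g i') :
    blockStart k g i + k i ≤ blockStart k g i' := by
  have hsub : insert i (univ.filter fun t => g t < g i) ⊆ univ.filter fun t => g t < g i' := by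
    intro t ht
    simp only [mem_insert, mem_filter, mem_univ, true_and] at ht ⊢
    rcases ht with rfl | ht
    exacts [h, ht.trans h]
  have := sum_le_sum_of_subset (f := k) hsub
  rwa [sum_insert (by simp), add_comm] at this

theorem blockStart_add_lt_sum (g : Fin m → Fin m) {i : Fin m} {j : ℕ} (hj : j < k i) :
    blockStart k g i + j < ∑ t, k t := by
  have := sum_le_sum_of_subset (f := k) (subset_univ (insert i (univ.filter fun t => g t < g i)))
  rw [sum_insert (by simp)] at this
  unfold blockStart
  omega

theorem blockStart_add_lt_blockStart_add_iff {g : Fin m → Fin m} (hg : Injective g)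
    {i i' : Fin m} {j j' : ℕ} (hj : j < k i) (hj' : j' < k i') :
    blockStart k g i + j < blockStart k g i' + j' ↔ g i < g i' ∨ (i = i' ∧ j < j') := by
  constructor
  · intro hlt
    rcases lt_trichotomy (g i) (g i') with h | h | h
    · exact Or.inl h
    · obtain rfl := hg h
      exact Or.inr ⟨rfl, by omega⟩
    · have := blockStart_add_le_blockStart k h
      omega
  · rintro (h | ⟨rfl, h⟩)
    · have := blockStart_add_le_blockStart k h
      omega
    · omega

theorem exists_eq_blockStart_add {g : Fin m → Fin m} (hg : Injective g) {p : ℕ}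
    (hp : p < ∑ t, k t) : ∃ i, ∃ j : Fin (k i), p = blockStart k g i + j := by
  let F : (Σ i, Fin (k i)) → Fin (∑ t, k t) := fun x =>
    ⟨blockStart k g x.1 + x.2, blockStart_add_lt_sum k g x.2.2⟩
  have hF : Injective F := by
    rintro ⟨i, j⟩ ⟨i', j'⟩ hij
    have hv : blockStart k g i + j = blockStart k g i' + j' := congrArg Fin.val hij
    have hlt := (blockStart_add_lt_blockStart_add_iff k hg j.2 j'.2).not.1 hv.not_lt
    have hgt := (blockStart_add_lt_blockStart_add_iff k hg j'.2 j.2).not.1 hv.symm.not_lt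
    push Not at hlt hgt
    obtain rfl : i = i' := hg (le_antisymm hgt.1 hlt.1)
    obtain rfl : j = j' := Fin.ext (le_antisymm (hgt.2 rfl) (hlt.2 rfl))
    rfl
  obtain ⟨⟨i, j⟩, hij⟩ := ((Fintype.bijective_iff_injective_and_card F).2 ⟨hF, by simp⟩).2 ⟨p, hp⟩
  exact ⟨i, j, (congrArg Fin.val hij).symm⟩

end Blocks

namespace IsInflation

variable {N m : ℕ} {k : Fin m → ℕ} {σ : Perm m} {α : ∀ i, Perm (k i)} {π : Perm N}

theorem exists_block (h : IsInflation σ α π) (p : Fin N) :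
    ∃ i, ∃ j : Fin (k i), (p : ℕ) = blockStart k id i + j :=
  exists_eq_blockStart_add k injective_id (h.2.1 ▸ p.2)

theorem apply_eq (h : IsInflation σ α π) {i : Fin m} {j : Fin (k i)} {p : Fin N}
    (hp : (p : ℕ) = blockStart k id i + j) : (π p : ℕ) = blockStart k σ i + α i j :=
  h.2.2 i j p hp

theorem apply_lt_apply_iff (h : IsInflation σ α π) {i i' : Fin m} {j : Fin (k i)}
    {j' : Fin (k i')} {p p' : Fin N} (hp : (p : ℕ) = blockStart k id i + j)
    (hp' : (p' : ℕ) = blockStart k id i' + j') :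
    π p < π p' ↔ σ i < σ i' ∨ (i = i' ∧ (α i j : ℕ) < α i' j') := by
  rw [Fin.lt_def, h.apply_eq hp, h.apply_eq hp']
  exact blockStart_add_lt_blockStart_add_iff k σ.injective (α i j).2 (α i' j').2

theorem exists_blocks_of_contains (h : IsInflation σ α π) {d : ℕ} {δ : Perm d}
    (hδ : Contains δ π) :
    ∃ bi : Fin d → Fin m, Monotone bi ∧ (∀ s t, σ (bi s) < σ (bi t) → δ s < δ t) ∧
      ∀ i, Occurs (fun s : {s // bi s = i} => δ s) (α i) := by
  obtain ⟨f, hf, hfδ⟩ := hδ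
  choose bi bj hb using fun s => h.exists_block (f s)
  refine ⟨bi, fun s t hst => ?_, fun s t hσ => ?_, fun i => ?_⟩
  · rcases hst.lt_or_eq with hst | rfl
    · have hlt : (f s : ℕ) < f t := hf hst
      rw [hb s, hb t, blockStart_add_lt_blockStart_add_iff k injective_id (bj s).2 (bj t).2]
        at hlt
      rcases hlt with hlt | ⟨heq, -⟩
      exacts [hlt.le, heq.le]
    · exact le_rfl
  · exact (hfδ s t).1 ((h.apply_lt_apply_iff (hb s) (hb t)).2 (Or.inl hσ))
  · have hpos : ∀ s : {s // bi s = i},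
        (f s : ℕ) = blockStart k id i + Fin.cast (congrArg k s.2) (bj s) := by
      rintro ⟨s, rfl⟩
      exact hb s
    refine ⟨fun s => Fin.cast (congrArg k s.2) (bj s), fun s t hst => ?_, fun s t => ?_⟩
    · have hlt : (f s : ℕ) < f t := hf hst
      rw [hpos s, hpos t] at hlt
      beta_reduce
      exact Fin.lt_def.2 (by omega)
    · beta_reduce
      rw [← hfδ, Fin.lt_def, Fin.lt_def, h.apply_eq (hpos s), h.apply_eq (hpos t)]
      omega

theorem contains_of_blocks (h : IsInflation σ α π) {d : ℕ} {δ : Perm d}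
    (bi : Fin d → Fin m) (hmono : Monotone bi) (hcross : ∀ s t, σ (bi s) < σ (bi t) → δ s < δ t)
    (hblock : ∀ i, Occurs (fun s : {s // bi s = i} => δ s) (α i)) : Contains δ π := by
  choose e he heδ using hblock
  let bj : ∀ s, Fin (k (bi s)) := fun s => e (bi s) ⟨s, rfl⟩
  have hbj : ∀ s i (hs : bi s = i),
      (bj s : ℕ) = e i ⟨s, hs⟩ ∧ (α (bi s) (bj s) : ℕ) = α i (e i ⟨s, hs⟩) := by
    rintro s i rfl
    exact ⟨rfl, rfl⟩
  have hsame : ∀ s t, bi s = bi t →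
      ((bj s : ℕ) < bj t ↔ s < t) ∧ ((α (bi s) (bj s) : ℕ) < α (bi t) (bj t) ↔ δ s < δ t) := by
    intro s t hst
    obtain ⟨hs, hαs⟩ := hbj s (bi t) hst
    rw [hs, hαs, ← Fin.lt_def, ← Fin.lt_def, (he _).lt_iff_lt, heδ]
    exact ⟨Iff.rfl, Iff.rfl⟩
  let f : Fin d → Fin N := fun s =>
    ⟨blockStart k id (bi s) + bj s, h.2.1 ▸ blockStart_add_lt_sum k id (bj s).2⟩
  have hf : ∀ s, (f s : ℕ) = blockStart k id (bi s) + bj s := fun s => rfl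
  refine ⟨f, fun s t hst => ?_, fun s t => ?_⟩
  · rw [Fin.lt_def, hf, hf, blockStart_add_lt_blockStart_add_iff k injective_id (bj s).2 (bj t).2]
    rcases (hmono hst.le).lt_or_eq with hlt | heq
    exacts [Or.inl hlt, Or.inr ⟨heq, ((hsame s t heq).1).2 hst⟩]
  · rw [h.apply_lt_apply_iff (hf s) (hf t)]
    rcases lt_trichotomy (σ (bi s)) (σ (bi t)) with hlt | heq | hgt
    · exact iff_of_true (Or.inl hlt) (hcross s t hlt)
    · have hst : bi s = bi t := σ.injective heq
      simp only [lt_irrefl, false_or, hst, true_and]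
      exact (hsame s t hst).2
    · refine iff_of_false ?_ (hcross t s hgt).asymm
      rintro (hlt | ⟨hst, -⟩)
      exacts [hlt.asymm hgt, (hst ▸ hgt).false]

theorem contains_iff (h : IsInflation σ α π) {d : ℕ} (δ : Perm d) :
    Contains δ π ↔ ∃ bi : Fin d → Fin m, Monotone bi ∧
      (∀ s t, σ (bi s) < σ (bi t) → δ s < δ t) ∧
      ∀ i, Occurs (fun s : {s // bi s = i} => δ s) (α i) :=
  ⟨h.exists_blocks_of_contains, fun ⟨bi, hmono, hcross, hblock⟩ =>
    h.contains_of_blocks bi hmono hcross hblock⟩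

end IsInflation

/-- For every permutation `β`, the set of properties `{Av(δ) : δ ≤ β}` is
query-complete. -/
theorem statement12 (b : ℕ) (β : Perm b) :
    QueryComplete {Q | ∃ (d : ℕ) (δ : Perm d), Contains δ β ∧
      Q = fun n => {π : Perm n | ¬ Contains δ π}} := by
  rintro m σ k k' α α' hα _ ⟨d, δ, hδβ, rfl⟩ N N' π π' h h'
  have hpatterns : ∀ i (c : ℕ) (p : Perm c), Contains p β →
      (Contains p (α i) ↔ Contains p (α' i)) := fun i c p hp =>
    not_iff_not.1 (hα i _ ⟨c, p, hp, rfl⟩)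
  show ¬ Contains δ π ↔ ¬ Contains δ π'
  rw [h.contains_iff, h'.contains_iff]
  refine not_congr (exists_congr fun bi => and_congr_right fun _ => and_congr_right fun _ =>
    forall_congr' fun i => occurs_iff_of_contains_iff ?_ (hpatterns i))
  exact (occurs_subtype δ _).trans hδβ
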